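/- A ℤ/2ℤ-colored graph (G,γ) is reflection-Laman if and only if it is a reflection-(2,2) graph and no subgraph with trivial ρ-image is a (2,2)-block (a subgraph with m' = 2n' − 2 edges satisfying m'' ≤ 2n'' − 2 on all of its subgraphs). -/
import Mathlib


section Preamble
variable {V E : Type}

/-- Rotation of the plane by angle θ, as a 2×2 matrix. -/
noncomputable def rotM (θ : ℝ) : Matrix (Fin 2) (Fin 2) ℝ :=
  !![Real.cos θ, -Real.sin θ; Real.sin θ, Real.cos θ]

/-- Counterclockwise rotation by π/2. -/
def perp (x : Fin 2 → ℝ) : Fin 2 → ℝ := ![-(x 1), x 0]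

def dot (a b : Fin 2 → ℝ) : ℝ := a 0 * b 0 + a 1 * b 1

def unitv (x : Fin 2 → ℝ) : Prop := x 0 ^ 2 + x 1 ^ 2 = 1

/-- Vertices spanned by an edge set. -/
def verts [DecidableEq V] (src tgt : E → V) (S : Finset E) : Finset V :=
  S.image src ∪ S.image tgt

/-- Walks in a directed multigraph using edges of `S`, each edge traversed
forwards (`true`) or backwards (`false`). -/
def IsWalk (src tgt : E → V) (S : Finset E) : V → V → List (E × Bool) → Prop
  | a, b, [] => a = b
  | a, b, (e, o) :: rest =>
      e ∈ S ∧ (if o = true then src e = a ∧ IsWalk src tgt S (tgt e) b rest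
               else tgt e = a ∧ IsWalk src tgt S (src e) b rest)

/-- Signed sum of colors along a walk. -/
def wsum {k : ℕ} (col : E → ZMod k) (l : List (E × Bool)) : ZMod k :=
  (l.map fun s => if s.2 = true then col s.1 else - col s.1).sum

def Conn (src tgt : E → V) (S : Finset E) (a b : V) : Prop :=
  ∃ l, IsWalk src tgt S a b l

def compOf [DecidableEq V] (src tgt : E → V) (S : Finset E) (v : V) : Set V :=
  {u | u ∈ verts src tgt S ∧ Conn src tgt S v u}

/-- Connected components of the subgraph spanned by S. -/
def comps [DecidableEq V] (src tgt : E → V) (S : Finset E) : Set (Set V) :=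
  {C | ∃ v ∈ verts src tgt S, C = compOf src tgt S v}

/-- A component has trivial ρ-image: all closed walks in it have color sum 0. -/
def TrivComp {k : ℕ} (src tgt : E → V) (col : E → ZMod k) (S : Finset E) (C : Set V) : Prop :=
  ∀ v ∈ C, ∀ l, IsWalk src tgt S v v l → wsum col l = 0

/-- number of connected components with trivial ρ-image -/
noncomputable def c0 [DecidableEq V] {k : ℕ} (src tgt : E → V) (col : E → ZMod k)
    (S : Finset E) : ℕ :=
  {C ∈ comps src tgt S | TrivComp src tgt col S C}.ncard

/-- number of connected components with nontrivial ρ-image -/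
noncomputable def cN [DecidableEq V] {k : ℕ} (src tgt : E → V) (col : E → ZMod k)
    (S : Finset E) : ℕ :=
  {C ∈ comps src tgt S | ¬ TrivComp src tgt col S C}.ncard

/-- every subgraph satisfies m' ≤ 2n' − c' − 3c'₀ -/
def ConeLamanSparse [DecidableEq V] {k : ℕ} (src tgt : E → V) (col : E → ZMod k) : Prop :=
  ∀ S : Finset E,
    S.card + cN src tgt col S + 3 * c0 src tgt col S ≤ 2 * (verts src tgt S).card

def ConeLaman [DecidableEq V] [Fintype V] [Fintype E] {k : ℕ}
    (src tgt : E → V) (col : E → ZMod k) : Prop :=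
  Fintype.card E + 1 = 2 * Fintype.card V ∧ ConeLamanSparse src tgt col

def Cone22 [DecidableEq V] [Fintype V] [Fintype E] {k : ℕ}
    (src tgt : E → V) (col : E → ZMod k) : Prop :=
  Fintype.card E = 2 * Fintype.card V ∧
  ∀ S : Finset E, S.card + 2 * c0 src tgt col S ≤ 2 * (verts src tgt S).card

def Refl22 [DecidableEq V] [Fintype V] [Fintype E] {k : ℕ}
    (src tgt : E → V) (col : E → ZMod k) : Prop :=
  Fintype.card E + 1 = 2 * Fintype.card V ∧
  ∀ S : Finset E,
    S.card + cN src tgt col S + 2 * c0 src tgt col S ≤ 2 * (verts src tgt S).card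

def ReflLaman [DecidableEq V] [Fintype V] [Fintype E]
    (src tgt : E → V) (col : E → ZMod 2) : Prop :=
  Fintype.card E + 1 = 2 * Fintype.card V ∧ ConeLamanSparse src tgt col

/-- every subgraph of S satisfies m' ≤ 2n' − 2c' − 3c'₀ -/
def RossSparse [DecidableEq V] {k : ℕ} (src tgt : E → V) (col : E → ZMod k)
    (S : Finset E) : Prop :=
  ∀ S' ⊆ S,
    S'.card + 2 * cN src tgt col S' + 3 * c0 src tgt col S' ≤ 2 * (verts src tgt S').card

/-- The subgraph S is a Ross graph: m = 2n − 2 and Ross-sparse. -/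
def IsRossSub [DecidableEq V] {k : ℕ} (src tgt : E → V) (col : E → ZMod k)
    (S : Finset E) : Prop :=
  S.card + 2 = 2 * (verts src tgt S).card ∧ RossSparse src tgt col S

/-- Becomes a Ross graph after deleting any single edge. -/
def RossCircuit [DecidableEq V] [DecidableEq E] {k : ℕ} (src tgt : E → V)
    (col : E → ZMod k) (S : Finset E) : Prop :=
  S.Nonempty ∧ ∀ e ∈ S, IsRossSub src tgt col (S.erase e)

/-- A (2,2)-block / (2,2)-graph: m = 2n−2, and (2,2)-sparse. -/
def Tight22 [DecidableEq V] (src tgt : E → V) (S : Finset E) : Prop :=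
  S.card + 2 = 2 * (verts src tgt S).card ∧
  ∀ S' ⊆ S, S'.Nonempty → S'.card + 2 ≤ 2 * (verts src tgt S').card

def SpanningTree [DecidableEq V] [Fintype V] (src tgt : E → V) (T : Finset E) : Prop :=
  (∀ a b : V, Conn src tgt T a b) ∧ T.card + 1 = Fintype.card V

def Spanning [DecidableEq V] [Fintype V] (src tgt : E → V) (S : Finset E) : Prop :=
  verts src tgt S = Finset.univ

/-- A map-graph (exactly one cycle per component, i.e. every component has as many
edges as vertices) all of whose components have nontrivial ρ-image. -/
def Map11 [DecidableEq V] {k : ℕ} (src tgt : E → V) (col : E → ZMod k) (S : Finset E) : Prop :=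
  (∀ C ∈ comps src tgt S, ((S : Set E) ∩ {e | src e ∈ C}).ncard = C.ncard) ∧
  (∀ C ∈ comps src tgt S, ¬ TrivComp src tgt col S C)

end Preamble

/-- The subgraph S has trivial ρ-image. -/
def TrivSub {V E : Type} {k : ℕ} (src tgt : E → V) (col : E → ZMod k)
    (S : Finset E) : Prop :=
  ∀ v : V, ∀ l, IsWalk src tgt S v v l → wsum col l = 0

section Stmt14Aux

open scoped Classical

variable {V E : Type} [DecidableEq V]

private lemma isWalk_nil (src tgt : E → V) (S : Finset E) (a b : V) :
    IsWalk src tgt S a b ([] : List (E × Bool)) ↔ a = b := Iff.rfl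

private lemma isWalk_cons_true (src tgt : E → V) (S : Finset E) (a b : V) (e : E)
    (rest : List (E × Bool)) :
    IsWalk src tgt S a b ((e, true) :: rest) ↔
      e ∈ S ∧ src e = a ∧ IsWalk src tgt S (tgt e) b rest := by
  simp [IsWalk]

private lemma isWalk_cons_false (src tgt : E → V) (S : Finset E) (a b : V) (e : E)
    (rest : List (E × Bool)) :
    IsWalk src tgt S a b ((e, false) :: rest) ↔
      e ∈ S ∧ tgt e = a ∧ IsWalk src tgt S (src e) b rest := by
  simp [IsWalk]

private lemma wsum_nil {k : ℕ} (col : E → ZMod k) : wsum col ([] : List (E × Bool)) = 0 := rfl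

private lemma isWalk_mono {src tgt : E → V} {S' S : Finset E} (hSS : S' ⊆ S) :
    ∀ {a b : V} {l : List (E × Bool)}, IsWalk src tgt S' a b l → IsWalk src tgt S a b l := by
  intro a b l
  induction l generalizing a with
  | nil => exact id
  | cons p rest ih =>
    obtain ⟨e, o⟩ := p
    cases o
    · rw [isWalk_cons_false, isWalk_cons_false]
      rintro ⟨he, h1, h2⟩
      exact ⟨hSS he, h1, ih h2⟩
    · rw [isWalk_cons_true, isWalk_cons_true]
      rintro ⟨he, h1, h2⟩
      exact ⟨hSS he, h1, ih h2⟩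

private lemma isWalk_append {src tgt : E → V} {S : Finset E} :
    ∀ {a b c : V} {l l' : List (E × Bool)}, IsWalk src tgt S a b l →
      IsWalk src tgt S b c l' → IsWalk src tgt S a c (l ++ l') := by
  intro a b c l l'
  induction l generalizing a with
  | nil => intro h h'; cases h; exact h'
  | cons p rest ih =>
    obtain ⟨e, o⟩ := p
    cases o
    · rw [isWalk_cons_false, List.cons_append, isWalk_cons_false]
      rintro ⟨he, h1, h2⟩ h'
      exact ⟨he, h1, ih h2 h'⟩
    · rw [isWalk_cons_true, List.cons_append, isWalk_cons_true]
      rintro ⟨he, h1, h2⟩ h'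
      exact ⟨he, h1, ih h2 h'⟩

private lemma conn_refl (src tgt : E → V) (S : Finset E) (a : V) : Conn src tgt S a a :=
  ⟨[], rfl⟩

private lemma conn_trans {src tgt : E → V} {S : Finset E} {a b c : V}
    (h : Conn src tgt S a b) (h' : Conn src tgt S b c) : Conn src tgt S a c := by
  obtain ⟨l, hl⟩ := h; obtain ⟨l', hl'⟩ := h'
  exact ⟨l ++ l', isWalk_append hl hl'⟩

private lemma conn_of_walk {src tgt : E → V} {S : Finset E} :
    ∀ (l : List (E × Bool)) {a b : V}, IsWalk src tgt S a b l → Conn src tgt S b a := by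
  intro l
  induction l with
  | nil => intro a b hl; cases hl; exact conn_refl _ _ _ _
  | cons p rest ih =>
    obtain ⟨e, o⟩ := p
    intro a b hl
    cases o
    · rw [isWalk_cons_false] at hl
      obtain ⟨he, h1, h2⟩ := hl
      refine conn_trans (ih h2) ⟨[(e, true)], ?_⟩
      rw [isWalk_cons_true]
      exact ⟨he, rfl, h1⟩
    · rw [isWalk_cons_true] at hl
      obtain ⟨he, h1, h2⟩ := hl
      refine conn_trans (ih h2) ⟨[(e, false)], ?_⟩
      rw [isWalk_cons_false]
      exact ⟨he, rfl, h1⟩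

private lemma conn_symm {src tgt : E → V} {S : Finset E} {a b : V}
    (h : Conn src tgt S a b) : Conn src tgt S b a := by
  obtain ⟨l, hl⟩ := h
  exact conn_of_walk l hl

private lemma mem_verts_iff {src tgt : E → V} {S : Finset E} {v : V} :
    v ∈ verts src tgt S ↔ ∃ e ∈ S, src e = v ∨ tgt e = v := by
  simp only [verts, Finset.mem_union, Finset.mem_image]
  constructor
  · rintro (⟨e, he, h⟩ | ⟨e, he, h⟩)
    · exact ⟨e, he, Or.inl h⟩
    · exact ⟨e, he, Or.inr h⟩
  · rintro ⟨e, he, (h | h)⟩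
    · exact Or.inl ⟨e, he, h⟩
    · exact Or.inr ⟨e, he, h⟩

private lemma src_mem_verts {src tgt : E → V} {S : Finset E} {e : E} (he : e ∈ S) :
    src e ∈ verts src tgt S := mem_verts_iff.2 ⟨e, he, Or.inl rfl⟩

private lemma tgt_mem_verts {src tgt : E → V} {S : Finset E} {e : E} (he : e ∈ S) :
    tgt e ∈ verts src tgt S := mem_verts_iff.2 ⟨e, he, Or.inr rfl⟩

private lemma conn_src_tgt {src tgt : E → V} {S : Finset E} {e : E} (he : e ∈ S) :
    Conn src tgt S (src e) (tgt e) :=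
  ⟨[(e, true)], by rw [isWalk_cons_true]; exact ⟨he, rfl, rfl⟩⟩

private lemma mem_compOf_self {src tgt : E → V} {S : Finset E} {v : V}
    (hv : v ∈ verts src tgt S) : v ∈ compOf src tgt S v :=
  ⟨hv, conn_refl _ _ _ _⟩

private lemma compOf_eq_of_mem {src tgt : E → V} {S : Finset E} {u v : V}
    (h : u ∈ compOf src tgt S v) : compOf src tgt S u = compOf src tgt S v := by
  obtain ⟨hu, hc⟩ := h
  ext w
  exact ⟨fun ⟨hw, hcw⟩ => ⟨hw, conn_trans hc hcw⟩,
    fun ⟨hw, hcw⟩ => ⟨hw, conn_trans (conn_symm hc) hcw⟩⟩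

private lemma comps_disjoint {src tgt : E → V} {S : Finset E} {C D : Set V}
    (hC : C ∈ comps src tgt S) (hD : D ∈ comps src tgt S) {v : V}
    (hvC : v ∈ C) (hvD : v ∈ D) : C = D := by
  obtain ⟨a, _, rfl⟩ := hC
  obtain ⟨b, _, rfl⟩ := hD
  rw [← compOf_eq_of_mem hvC, ← compOf_eq_of_mem hvD]

private lemma comp_subset_verts {src tgt : E → V} {S : Finset E} {C : Set V}
    (hC : C ∈ comps src tgt S) : C ⊆ (verts src tgt S : Set V) := by
  obtain ⟨a, _, rfl⟩ := hC
  intro u hu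
  exact hu.1

private lemma comp_eq_compOf {src tgt : E → V} {S : Finset E} {C : Set V}
    (hC : C ∈ comps src tgt S) {v : V} (hv : v ∈ C) : C = compOf src tgt S v := by
  obtain ⟨a, _, rfl⟩ := hC
  exact (compOf_eq_of_mem hv).symm

private lemma comp_nonempty {src tgt : E → V} {S : Finset E} {C : Set V}
    (hC : C ∈ comps src tgt S) : C.Nonempty := by
  obtain ⟨a, ha, rfl⟩ := hC
  exact ⟨a, mem_compOf_self ha⟩

private lemma comp_conn {src tgt : E → V} {S : Finset E} {C : Set V}
    (hC : C ∈ comps src tgt S) {u v : V} (hu : u ∈ C) (hv : v ∈ C) :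
    Conn src tgt S u v := by
  obtain ⟨a, _, rfl⟩ := hC
  exact conn_trans (conn_symm hu.2) hv.2

private lemma comp_tgt_mem {src tgt : E → V} {S : Finset E} {C : Set V}
    (hC : C ∈ comps src tgt S) {e : E} (he : e ∈ S) (h : src e ∈ C) : tgt e ∈ C := by
  obtain ⟨a, _, rfl⟩ := hC
  exact ⟨tgt_mem_verts he, conn_trans h.2 (conn_src_tgt he)⟩

private lemma comp_src_mem {src tgt : E → V} {S : Finset E} {C : Set V}
    (hC : C ∈ comps src tgt S) {e : E} (he : e ∈ S) (h : tgt e ∈ C) : src e ∈ C := by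
  obtain ⟨a, _, rfl⟩ := hC
  exact ⟨src_mem_verts he, conn_trans h.2 (conn_symm (conn_src_tgt he))⟩

/-- Edges of `S` whose source lies in `C`. -/
private noncomputable def SC (src tgt : E → V) (S : Finset E) (C : Set V) : Finset E :=
  S.filter (fun e => src e ∈ C)

private lemma mem_SC {src tgt : E → V} {S : Finset E} {C : Set V} {e : E} :
    e ∈ SC src tgt S C ↔ e ∈ S ∧ src e ∈ C := Finset.mem_filter

private lemma SC_subset {src tgt : E → V} {S : Finset E} {C : Set V} :
    SC src tgt S C ⊆ S := Finset.filter_subset _ _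

private lemma walk_in_comp {src tgt : E → V} {S : Finset E} {C : Set V}
    (hC : C ∈ comps src tgt S) :
    ∀ {v b : V} {l : List (E × Bool)}, v ∈ C → IsWalk src tgt S v b l →
      b ∈ C ∧ IsWalk src tgt (SC src tgt S C) v b l := by
  intro v b l
  induction l generalizing v with
  | nil => intro hv h; cases h; exact ⟨hv, rfl⟩
  | cons p rest ih =>
    obtain ⟨e, o⟩ := p
    cases o
    · rw [isWalk_cons_false, isWalk_cons_false]
      rintro hv ⟨he, h1, h2⟩
      have hsrc : src e ∈ C := comp_src_mem hC he (h1 ▸ hv)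
      obtain ⟨hb, hw⟩ := ih hsrc h2
      exact ⟨hb, mem_SC.2 ⟨he, hsrc⟩, h1, hw⟩
    · rw [isWalk_cons_true, isWalk_cons_true]
      rintro hv ⟨he, h1, h2⟩
      have hsrc : src e ∈ C := h1 ▸ hv
      have htgt : tgt e ∈ C := comp_tgt_mem hC he hsrc
      obtain ⟨hb, hw⟩ := ih htgt h2
      exact ⟨hb, mem_SC.2 ⟨he, hsrc⟩, h1, hw⟩

private lemma mem_verts_SC {src tgt : E → V} {S : Finset E} {C : Set V}
    (hC : C ∈ comps src tgt S) {v : V} :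
    v ∈ verts src tgt (SC src tgt S C) ↔ v ∈ C := by
  constructor
  · intro hv
    obtain ⟨e, he, h⟩ := mem_verts_iff.1 hv
    obtain ⟨heS, hsrc⟩ := mem_SC.1 he
    rcases h with h | h
    · exact h ▸ hsrc
    · exact h ▸ comp_tgt_mem hC heS hsrc
  · intro hv
    have hv' : v ∈ verts src tgt S := comp_subset_verts hC hv
    obtain ⟨e, he, h⟩ := mem_verts_iff.1 hv'
    rcases h with h | h
    · exact mem_verts_iff.2 ⟨e, mem_SC.2 ⟨he, h ▸ hv⟩, Or.inl h⟩
    · exact mem_verts_iff.2 ⟨e, mem_SC.2 ⟨he, comp_src_mem hC he (h ▸ hv)⟩, Or.inr h⟩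

private lemma coe_verts_SC {src tgt : E → V} {S : Finset E} {C : Set V}
    (hC : C ∈ comps src tgt S) : (verts src tgt (SC src tgt S C) : Set V) = C := by
  ext v
  exact (by simpa using mem_verts_SC hC (v := v))

private lemma compOf_SC {src tgt : E → V} {S : Finset E} {C : Set V}
    (hC : C ∈ comps src tgt S) {v : V} (hv : v ∈ C) :
    compOf src tgt (SC src tgt S C) v = C := by
  ext u
  constructor
  · rintro ⟨hu, _⟩
    exact (mem_verts_SC hC).1 hu
  · intro hu
    refine ⟨(mem_verts_SC hC).2 hu, ?_⟩
    obtain ⟨l, hl⟩ := comp_conn hC hv hu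
    exact ⟨l, (walk_in_comp hC hv hl).2⟩

private lemma comps_SC {src tgt : E → V} {S : Finset E} {C : Set V}
    (hC : C ∈ comps src tgt S) : comps src tgt (SC src tgt S C) = {C} := by
  ext D
  constructor
  · rintro ⟨v, hv, rfl⟩
    exact compOf_SC hC ((mem_verts_SC hC).1 hv)
  · rintro rfl
    obtain ⟨v, hv⟩ := comp_nonempty hC
    exact ⟨v, (mem_verts_SC hC).2 hv, (compOf_SC hC hv).symm⟩

private lemma trivComp_SC {k : ℕ} {src tgt : E → V} {col : E → ZMod k} {S : Finset E}
    {C : Set V} (hC : C ∈ comps src tgt S) :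
    TrivComp src tgt col (SC src tgt S C) C ↔ TrivComp src tgt col S C := by
  constructor
  · intro h v hv l hl
    exact h v hv l (walk_in_comp hC hv hl).2
  · intro h v hv l hl
    exact h v hv l (isWalk_mono SC_subset hl)

/-- finset of connected components -/
private noncomputable def compsF [Fintype V] (src tgt : E → V) (S : Finset E) :
    Finset (Set V) :=
  (Set.toFinite (comps src tgt S)).toFinset

private lemma mem_compsF [Fintype V] {src tgt : E → V} {S : Finset E} {C : Set V} :
    C ∈ compsF src tgt S ↔ C ∈ comps src tgt S := Set.Finite.mem_toFinset _

private lemma c0_eq_filter [Fintype V] {k : ℕ} {src tgt : E → V} {col : E → ZMod k}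
    {S : Finset E} :
    c0 src tgt col S =
      ((compsF src tgt S).filter (fun C => TrivComp src tgt col S C)).card := by
  rw [c0, ← Set.ncard_coe_finset]
  congr 1
  ext C
  simp [mem_compsF, Set.mem_setOf_eq]

private lemma cN_eq_filter [Fintype V] {k : ℕ} {src tgt : E → V} {col : E → ZMod k}
    {S : Finset E} :
    cN src tgt col S =
      ((compsF src tgt S).filter (fun C => ¬ TrivComp src tgt col S C)).card := by
  rw [cN, ← Set.ncard_coe_finset]
  congr 1
  ext C
  simp [mem_compsF, Set.mem_setOf_eq]

private lemma card_S_eq [Fintype V] {src tgt : E → V} {S : Finset E} :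
    S.card = ∑ C ∈ compsF src tgt S, (SC src tgt S C).card := by
  rw [← Finset.card_biUnion]
  · congr 1
    ext e
    simp only [Finset.mem_biUnion, mem_compsF, mem_SC]
    constructor
    · intro he
      exact ⟨compOf src tgt S (src e), ⟨src e, src_mem_verts he, rfl⟩, he,
        mem_compOf_self (src_mem_verts he)⟩
    · rintro ⟨C, _, he, _⟩; exact he
  · intro C hC D hD hne
    refine Finset.disjoint_left.2 fun e heC heD => hne ?_
    exact comps_disjoint (mem_compsF.1 hC) (mem_compsF.1 hD)
      (mem_SC.1 heC).2 (mem_SC.1 heD).2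

private lemma card_verts_eq [Fintype V] {src tgt : E → V} {S : Finset E} :
    (verts src tgt S).card = ∑ C ∈ compsF src tgt S, C.ncard := by
  have : verts src tgt S =
      (compsF src tgt S).biUnion (fun C => (Set.toFinite C).toFinset) := by
    ext v
    simp only [Finset.mem_biUnion, mem_compsF, Set.Finite.mem_toFinset]
    constructor
    · intro hv
      exact ⟨compOf src tgt S v, ⟨v, hv, rfl⟩, mem_compOf_self hv⟩
    · rintro ⟨C, hC, hv⟩
      exact comp_subset_verts hC hv
  rw [this, Finset.card_biUnion]
  · exact Finset.sum_congr rfl fun C _ => (Set.ncard_eq_toFinset_card C (Set.toFinite C)).symm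
  · intro C hC D hD hne
    refine Finset.disjoint_left.2 fun v hvC hvD => hne ?_
    exact comps_disjoint (mem_compsF.1 hC) (mem_compsF.1 hD)
      ((Set.Finite.mem_toFinset _).1 hvC) ((Set.Finite.mem_toFinset _).1 hvD)

private lemma c0_SC_of_triv [Fintype V] {k : ℕ} {src tgt : E → V} {col : E → ZMod k}
    {S : Finset E} {C : Set V} (hC : C ∈ comps src tgt S)
    (h : TrivComp src tgt col S C) :
    c0 src tgt col (SC src tgt S C) = 1 ∧ cN src tgt col (SC src tgt S C) = 0 := by
  have h' : TrivComp src tgt col (SC src tgt S C) C := (trivComp_SC hC).2 h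
  constructor
  · rw [c0]
    have : {D ∈ comps src tgt (SC src tgt S C) | TrivComp src tgt col (SC src tgt S C) D}
        = {C} := by
      rw [comps_SC hC]
      ext D
      simp only [Set.mem_setOf_eq, Set.mem_singleton_iff]
      exact ⟨fun ⟨h1, _⟩ => h1, fun h1 => ⟨h1, h1 ▸ h'⟩⟩
    rw [this, Set.ncard_singleton]
  · rw [cN]
    have : {D ∈ comps src tgt (SC src tgt S C) | ¬ TrivComp src tgt col (SC src tgt S C) D}
        = ∅ := by
      rw [comps_SC hC]
      ext D
      simp only [Set.mem_setOf_eq, Set.mem_singleton_iff, Set.mem_empty_iff_false,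
        iff_false, not_and, not_not]
      rintro rfl
      exact h'
    rw [this, Set.ncard_empty]

private lemma c0_SC_of_nontriv [Fintype V] {k : ℕ} {src tgt : E → V} {col : E → ZMod k}
    {S : Finset E} {C : Set V} (hC : C ∈ comps src tgt S)
    (h : ¬ TrivComp src tgt col S C) :
    c0 src tgt col (SC src tgt S C) = 0 ∧ cN src tgt col (SC src tgt S C) = 1 := by
  have h' : ¬ TrivComp src tgt col (SC src tgt S C) C := fun hh => h ((trivComp_SC hC).1 hh)
  constructor
  · rw [c0]
    have : {D ∈ comps src tgt (SC src tgt S C) | TrivComp src tgt col (SC src tgt S C) D}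
        = ∅ := by
      rw [comps_SC hC]
      ext D
      simp only [Set.mem_setOf_eq, Set.mem_singleton_iff, Set.mem_empty_iff_false,
        iff_false, not_and]
      rintro rfl
      exact h'
    rw [this, Set.ncard_empty]
  · rw [cN]
    have : {D ∈ comps src tgt (SC src tgt S C) | ¬ TrivComp src tgt col (SC src tgt S C) D}
        = {C} := by
      rw [comps_SC hC]
      ext D
      simp only [Set.mem_setOf_eq, Set.mem_singleton_iff]
      exact ⟨fun ⟨h1, _⟩ => h1, fun h1 => ⟨h1, h1 ▸ h'⟩⟩
    rw [this, Set.ncard_singleton]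

private lemma card_verts_SC [Fintype V] {src tgt : E → V} {S : Finset E} {C : Set V}
    (hC : C ∈ comps src tgt S) : (verts src tgt (SC src tgt S C)).card = C.ncard := by
  rw [← Set.ncard_coe_finset, coe_verts_SC hC]

private lemma verts_empty (src tgt : E → V) : verts src tgt (∅ : Finset E) = ∅ := by
  simp [verts]

/-- All subgraphs of a trivially-colored subgraph have `cN = 0` and, if nonempty, `c0 ≥ 1`. -/
private lemma cN_zero_of_trivSub [Fintype V] {k : ℕ} {src tgt : E → V} {col : E → ZMod k}
    {S : Finset E} (h : TrivSub src tgt col S) : cN src tgt col S = 0 := by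
  rw [cN]
  have : {C ∈ comps src tgt S | ¬ TrivComp src tgt col S C} = ∅ := by
    ext C
    simp only [Set.mem_setOf_eq, Set.mem_empty_iff_false, iff_false, not_and, not_not]
    intro _
    exact fun v _ l hl => h v l hl
  rw [this, Set.ncard_empty]

private lemma c0_pos_of_trivSub [Fintype V] {k : ℕ} {src tgt : E → V} {col : E → ZMod k}
    {S : Finset E} (h : TrivSub src tgt col S) (hne : S.Nonempty) :
    1 ≤ c0 src tgt col S := by
  obtain ⟨e, he⟩ := hne
  have hv : src e ∈ verts src tgt S := src_mem_verts he
  have hmem : compOf src tgt S (src e) ∈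
      {C ∈ comps src tgt S | TrivComp src tgt col S C} :=
    ⟨⟨src e, hv, rfl⟩, fun v _ l hl => h v l hl⟩
  have hfin : {C ∈ comps src tgt S | TrivComp src tgt col S C}.Finite := Set.toFinite _
  exact (Set.ncard_pos hfin).2 ⟨_, hmem⟩

/-- A trivially-colored subgraph satisfies the (2,2)-sparsity counts via Refl22. -/
private lemma sparse22_of_refl22 [Fintype V] [Fintype E] {k : ℕ} {src tgt : E → V}
    {col : E → ZMod k} (hR : Refl22 src tgt col) {S : Finset E}
    (h : TrivSub src tgt col S) (hne : S.Nonempty) :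
    S.card + 2 ≤ 2 * (verts src tgt S).card := by
  have := hR.2 S
  rw [cN_zero_of_trivSub h] at this
  have h1 := c0_pos_of_trivSub h hne
  omega

private lemma trivSub_of_subset {k : ℕ} {src tgt : E → V} {col : E → ZMod k}
    {S' S : Finset E} (hSS : S' ⊆ S) (h : TrivSub src tgt col S) :
    TrivSub src tgt col S' := fun v l hl => h v l (isWalk_mono hSS hl)

/-- The edges of a trivial component form a trivially-colored subgraph. -/
private lemma trivSub_SC {k : ℕ} {src tgt : E → V} {col : E → ZMod k} {S : Finset E}
    {C : Set V} (hC : C ∈ comps src tgt S) (h : TrivComp src tgt col S C) :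
    TrivSub src tgt col (SC src tgt S C) := by
  intro v l hl
  cases l with
  | nil => exact wsum_nil col
  | cons p rest =>
    obtain ⟨e, o⟩ := p
    have hv : v ∈ C := by
      cases o
      · rw [isWalk_cons_false] at hl
        obtain ⟨he, h1, _⟩ := hl
        obtain ⟨heS, hsrc⟩ := mem_SC.1 he
        exact h1 ▸ comp_tgt_mem hC heS hsrc
      · rw [isWalk_cons_true] at hl
        obtain ⟨he, h1, _⟩ := hl
        exact h1 ▸ (mem_SC.1 he).2
    exact h v hv _ (isWalk_mono SC_subset hl)

end Stmt14Aux

/-- (G,γ) is reflection-Laman iff it is reflection-(2,2) and no subgraph with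
trivial ρ-image is a (2,2)-block. -/
theorem stmt14 {V E : Type} [Fintype V] [Fintype E] [DecidableEq V]
    (src tgt : E → V) (col : E → ZMod 2) :
    ReflLaman src tgt col ↔
      (Refl22 src tgt col ∧
        ∀ S : Finset E, TrivSub src tgt col S → ¬ Tight22 src tgt S) := by
  classical
  constructor
  · rintro ⟨hcount, hsp⟩
    refine ⟨⟨hcount, fun S => ?_⟩, fun S hTriv hTight => ?_⟩
    · have := hsp S; omega
    · have hne : S.Nonempty := by
        rcases Finset.eq_empty_or_nonempty S with rfl | h
        · exfalso
          have h2 := hTight.1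
          rw [verts_empty] at h2
          simp at h2
        · exact h
      have h0 := cN_zero_of_trivSub hTriv
      have h1 := c0_pos_of_trivSub hTriv hne
      have h2 := hsp S
      have h3 := hTight.1
      omega
  · rintro ⟨⟨hcount, hsp⟩, hblock⟩
    refine ⟨hcount, fun S => ?_⟩
    have key : ∀ C ∈ compsF src tgt S,
        (SC src tgt S C).card + (if TrivComp src tgt col S C then 3 else 1)
          ≤ 2 * C.ncard := by
      intro C hCF
      have hC := mem_compsF.1 hCF
      by_cases hT : TrivComp src tgt col S C
      · rw [if_pos hT]
        obtain ⟨hc0, hcN⟩ := c0_SC_of_triv hC hT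
        have hle := hsp (SC src tgt S C)
        rw [hc0, hcN, card_verts_SC hC] at hle
        by_contra hgt
        push_neg at hgt
        have heq : (SC src tgt S C).card + 2 = 2 * C.ncard := by omega
        have hTriv' : TrivSub src tgt col (SC src tgt S C) := trivSub_SC hC hT
        refine hblock _ hTriv' ⟨?_, ?_⟩
        · rw [card_verts_SC hC]; exact heq
        · intro S' hS' hne'
          exact sparse22_of_refl22 ⟨hcount, hsp⟩ (trivSub_of_subset hS' hTriv') hne'
      · rw [if_neg hT]
        obtain ⟨hc0, hcN⟩ := c0_SC_of_nontriv hC hT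
        have hle := hsp (SC src tgt S C)
        rw [hc0, hcN, card_verts_SC hC] at hle
        omega
    have hsum := Finset.sum_le_sum key
    rw [Finset.sum_add_distrib, ← card_S_eq] at hsum
    have hw : ∑ C ∈ compsF src tgt S, (if TrivComp src tgt col S C then 3 else 1)
        = 3 * c0 src tgt col S + cN src tgt col S := by
      rw [Finset.sum_ite, Finset.sum_const, Finset.sum_const, smul_eq_mul, smul_eq_mul,
        ← c0_eq_filter, ← cN_eq_filter]
      ring
    have hv : ∑ C ∈ compsF src tgt S, 2 * C.ncard = 2 * (verts src tgt S).card := by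
      rw [← Finset.mul_sum, ← card_verts_eq]
    rw [hw, hv] at hsum
    omega
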